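/- Let (X₁, Y₁), ..., (X_m, Y_m), (X, Y) be exchangeable random pairs, with Y real-valued. Let L, U : X-space → R be fixed measurable functions, define conformity scores λ_i = max(L(X_i) - Y_i, Y_i - U(X_i)), assume the scores λ₁,...,λ_m, λ = max(L(X)-Y, Y-U(X)) are almost surely distinct, and let q be the ⌈(1-α)(m+1)⌉-th smallest among λ₁,...,λ_m, for α ∈ (1/(m+1), 1). Then P( L(X) - q ≤ Y ≤ U(X) + q ) ≥ 1 - α, and P( Y ∉ [L(X)-q, U(X)+q] ) ≥ α - 1/(m+1). -/

import Mathlib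

/-!
`Y` lies in `[L(X) - q, U(X) + q]` exactly when the test score `λ` is at most `q`. When the
scores are distinct, `λ` is at most the `k`-th smallest calibration score iff the rank of `λ`
among all `m + 1` scores is at most `k`. Exactly `k` of the `m + 1` scores have rank `≤ k`, and
by exchangeability each score is equally likely to be one of them, so the coverage
probability is `k / (m + 1)` with `k = ⌈(1 - α)(m + 1)⌉`, which lies in
`[1 - α, 1 - α + 1/(m + 1))`.
-/

open MeasureTheory Finset Function
open scoped ENNReal

namespace Tuple

variable {α : Type*} [LinearOrder α] {n : ℕ}

def rank (t : Fin n → α) (j : Fin n) : ℕ := #{i | t i ≤ t j}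

lemma strictMono_comp_sort {f : Fin n → α} (hf : Injective f) : StrictMono (f ∘ sort f) :=
  (monotone_sort f).strictMono_of_injective (hf.comp (sort f).injective)

lemma card_lt_sort_apply {f : Fin n → α} (hf : Injective f) (j : Fin n) :
    #{i | f i < f (sort f j)} = j := by
  calc #{i | f i < f (sort f j)} = #{i : Fin n | i < j} :=
        (card_equiv (sort f) fun i => by simpa using (strictMono_comp_sort hf).lt_iff_lt.symm).symm
    _ = j := by simpa using Fin.card_filter_val_lt (n := n) (m := j)

lemma rank_sort_apply {f : Fin n → α} (hf : Injective f) (j : Fin n) :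
    rank f (sort f j) = j + 1 := by
  calc rank f (sort f j) = #{i : Fin n | (i : ℕ) < j + 1} :=
        (card_equiv (sort f) fun i => by
          simpa [Nat.lt_succ_iff] using (strictMono_comp_sort hf).le_iff_le.symm).symm
    _ = j + 1 := by rw [Fin.card_filter_val_lt]; omega

lemma le_sort_apply_iff {f : Fin n → α} (hf : Injective f) (x : α) (j : Fin n) :
    x ≤ f (sort f j) ↔ #{i | f i < x} ≤ j := by
  constructor
  · intro hx
    calc #{i | f i < x} ≤ #{i | f i < f (sort f j)} :=
          card_le_card fun i => by simpa using fun h => h.trans_le hx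
      _ = j := card_lt_sort_apply hf j
  · intro hcard
    by_contra! hlt
    have : rank f (sort f j) ≤ #{i | f i < x} :=
      card_le_card fun i => by simpa [rank] using fun h => h.trans_lt hlt
    rw [rank_sort_apply hf] at this
    omega

lemma rank_last {m : ℕ} {t : Fin (m + 1) → α} (ht : Injective t) :
    rank t (Fin.last m) = #{i : Fin m | t i.castSucc < t (Fin.last m)} + 1 := by
  rw [rank, card_filter, card_filter, Fin.sum_univ_castSucc]
  simp [(ht.ne (Fin.castSucc_lt_last _).ne).le_iff_lt]

lemma last_le_sort_castSucc_iff {m : ℕ} {t : Fin (m + 1) → α} (ht : Injective t) (j : Fin m) :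
    t (Fin.last m) ≤ (fun i : Fin m => t i.castSucc) (sort (fun i : Fin m => t i.castSucc) j) ↔
      rank t (Fin.last m) ≤ j + 1 := by
  rw [le_sort_apply_iff (f := fun i : Fin m => t i.castSucc) (ht.comp (Fin.castSucc_injective m)),
    rank_last ht]
  omega

lemma card_rank_le {t : Fin n → α} (ht : Injective t) {k : ℕ} (hk : k ≤ n) :
    #{j | rank t j ≤ k} = k := by
  calc #{j | rank t j ≤ k} = #{i : Fin n | (i : ℕ) < k} := by
        refine (card_equiv (sort t) fun i => ?_).symm
        rw [mem_filter_univ, mem_filter_univ, rank_sort_apply ht, Nat.lt_iff_add_one_le]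
    _ = k := by rw [Fin.card_filter_val_lt, min_eq_right hk]

lemma rank_comp_perm (t : Fin n → α) (e : Equiv.Perm (Fin n)) (j : Fin n) :
    rank (t ∘ e) j = rank t (e j) :=
  card_equiv e fun i => by simp

lemma measurable_rank (j : Fin n) : Measurable fun t : Fin n → ℝ => rank t j := by
  simp_rw [rank, card_filter]
  exact Finset.measurable_sum _ fun i _ => Measurable.ite
    (measurableSet_le (measurable_pi_apply i) (measurable_pi_apply j))
    measurable_const measurable_const

end Tuple

namespace ProbabilityTheory

open Tuple

variable {Ω : Type*} [MeasurableSpace Ω] {μ : Measure Ω} {n : ℕ}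

def Exchangeable {β : Type*} [MeasurableSpace β] (μ : Measure Ω) (Z : Ω → Fin n → β) :
    Prop :=
  ∀ e : Equiv.Perm (Fin n), μ.map (fun ω => Z ω ∘ e) = μ.map Z

lemma Exchangeable.comp {β γ : Type*} [MeasurableSpace β] [MeasurableSpace γ]
    {Z : Ω → Fin n → β} (hZ : Exchangeable μ Z) (hZm : Measurable Z) {g : β → γ}
    (hg : Measurable g) : Exchangeable μ fun ω => g ∘ Z ω := by
  intro e
  have hG : Measurable fun z : Fin n → β => g ∘ z :=
    measurable_pi_lambda _ fun i => hg.comp (measurable_pi_apply i)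
  have hZe : Measurable fun ω => Z ω ∘ e :=
    measurable_pi_lambda _ fun i => (measurable_pi_apply (e i)).comp hZm
  calc μ.map (fun ω => g ∘ Z ω ∘ e) = (μ.map fun ω => Z ω ∘ e).map (g ∘ ·) :=
        (Measure.map_map hG hZe).symm
    _ = (μ.map Z).map (g ∘ ·) := by rw [hZ e]
    _ = μ.map fun ω => g ∘ Z ω := Measure.map_map hG hZm

lemma ae_eq_last_le_sort_castSucc {α : Type*} [LinearOrder α] {m : ℕ}
    {S : Ω → Fin (m + 1) → α}
    (hinj : ∀ᵐ ω ∂μ, Injective (S ω)) (j : Fin m) :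
    {ω | S ω (Fin.last m) ≤
        (fun i : Fin m => S ω i.castSucc) (sort (fun i : Fin m => S ω i.castSucc) j)} =ᵐ[μ]
      {ω | rank (S ω) (Fin.last m) ≤ j + 1} :=
  Filter.eventuallyEq_set.mpr <| hinj.mono fun _ hω => last_le_sort_castSucc_iff hω j

section RealScores

variable {S : Ω → Fin n → ℝ}

lemma Exchangeable.measure_rank_le_eq (hS : Exchangeable μ S) (hSm : Measurable S) (k : ℕ)
    (i j : Fin n) : μ {ω | rank (S ω) i ≤ k} = μ {ω | rank (S ω) j ≤ k} := by
  have hB : MeasurableSet {t : Fin n → ℝ | rank t j ≤ k} :=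
    measurable_rank j measurableSet_Iic
  have hSe : Measurable fun ω => S ω ∘ Equiv.swap i j :=
    measurable_pi_lambda _ fun l => (measurable_pi_apply _).comp hSm
  have hpre : {ω | rank (S ω) i ≤ k} =
      (fun ω => S ω ∘ Equiv.swap i j) ⁻¹' {t | rank t j ≤ k} := by
    ext ω; simp [rank_comp_perm]
  rw [hpre, ← Measure.map_apply hSe hB, hS, Measure.map_apply hSm hB]
  rfl

variable [IsProbabilityMeasure μ]

lemma sum_measure_rank_le (hSm : Measurable S) (hinj : ∀ᵐ ω ∂μ, Injective (S ω)) {k : ℕ}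
    (hk : k ≤ n) : ∑ j, μ {ω | rank (S ω) j ≤ k} = k := by
  have hmeas (j : Fin n) : MeasurableSet {ω | rank (S ω) j ≤ k} :=
    (measurable_rank j).comp hSm measurableSet_Iic
  calc ∑ j, μ {ω | rank (S ω) j ≤ k}
      = ∑ j, ∫⁻ ω, {ω | rank (S ω) j ≤ k}.indicator 1 ω ∂μ := by
        simp only [lintegral_indicator_one (hmeas _)]
    _ = ∫⁻ ω, ∑ j, {ω | rank (S ω) j ≤ k}.indicator 1 ω ∂μ :=
        (lintegral_finsetSum _ fun j _ => measurable_const.indicator (hmeas j)).symm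
    _ = ∫⁻ _, (k : ℝ≥0∞) ∂μ := lintegral_congr_ae <| hinj.mono fun ω hω => by
        simp [Set.indicator_apply, card_rank_le hω hk]
    _ = k := by simp

lemma Exchangeable.measureReal_rank_le (hS : Exchangeable μ S) (hSm : Measurable S)
    (hinj : ∀ᵐ ω ∂μ, Injective (S ω)) (j : Fin n) {k : ℕ} (hk : k ≤ n) :
    μ.real {ω | rank (S ω) j ≤ k} = k / n := by
  have hsum := sum_measure_rank_le hSm hinj hk
  simp only [hS.measure_rank_le_eq hSm k _ j, sum_const, card_univ, Fintype.card_fin,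
    nsmul_eq_mul] at hsum
  have hn : (n : ℝ) ≠ 0 := Nat.cast_ne_zero.mpr j.pos.ne'
  rw [eq_div_iff hn, mul_comm, measureReal_def, ← ENNReal.toReal_natCast n,
    ← ENNReal.toReal_mul, hsum, ENNReal.toReal_natCast]

end RealScores

variable [IsProbabilityMeasure μ] {m : ℕ} {S : Ω → Fin (m + 1) → ℝ}

theorem Exchangeable.measureReal_last_le_sort_castSucc (hS : Exchangeable μ S)
    (hSm : Measurable S) (hinj : ∀ᵐ ω ∂μ, Injective (S ω)) (j : Fin m) :
    μ.real {ω | S ω (Fin.last m) ≤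
        (fun i : Fin m => S ω i.castSucc) (sort (fun i : Fin m => S ω i.castSucc) j)} =
      (j + 1) / (m + 1) := by
  rw [measureReal_congr (ae_eq_last_le_sort_castSucc hinj j),
    hS.measureReal_rank_le hSm hinj _ (Nat.succ_le_succ j.isLt.le)]
  push_cast
  rfl

theorem Exchangeable.measureReal_not_last_le_sort_castSucc (hS : Exchangeable μ S)
    (hSm : Measurable S) (hinj : ∀ᵐ ω ∂μ, Injective (S ω)) (j : Fin m) :
    μ.real {ω | ¬ S ω (Fin.last m) ≤
        (fun i : Fin m => S ω i.castSucc) (sort (fun i : Fin m => S ω i.castSucc) j)} =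
      1 - (j + 1) / (m + 1) := by
  have hE := ae_eq_last_le_sort_castSucc (μ := μ) hinj j
  have hnull := ((measurable_rank _).comp hSm measurableSet_Iic).nullMeasurableSet.congr hE.symm
  rw [← hS.measureReal_last_le_sort_castSucc hSm hinj j, ← probReal_compl_eq_one_sub₀ hnull]
  rfl

end ProbabilityTheory

open ProbabilityTheory

lemma max_sub_sub_le_iff {l y u q : ℝ} :
    max (l - y) (y - u) ≤ q ↔ l - q ≤ y ∧ y ≤ u + q := by
  rw [max_le_iff]
  constructor <;> rintro ⟨h₁, h₂⟩ <;> constructor <;> linarith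

/-- conformalized quantile regression coverage guarantee. -/
theorem stmt12 {Ω : Type*} [MeasurableSpace Ω] (μ : Measure Ω) [IsProbabilityMeasure μ]
    (m p : ℕ) (hm : 0 < m)
    (X : Fin (m + 1) → Ω → EuclideanSpace ℝ (Fin p)) (Y : Fin (m + 1) → Ω → ℝ)
    (hXmeas : ∀ i, Measurable (X i)) (hYmeas : ∀ i, Measurable (Y i))
    (hexch : ∀ e : Equiv.Perm (Fin (m + 1)),
      Measure.map (fun ω => fun i => (X (e i) ω, Y (e i) ω)) μ =
        Measure.map (fun ω => fun i => (X i ω, Y i ω)) μ)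
    (L U : EuclideanSpace ℝ (Fin p) → ℝ) (hL : Measurable L) (hU : Measurable U)
    (s : Fin (m + 1) → Ω → ℝ)
    (hs : s = fun i ω => max (L (X i ω) - Y i ω) (Y i ω - U (X i ω)))
    (hdistinct : ∀ᵐ ω ∂μ, ∀ i j, i ≠ j → s i ω ≠ s j ω)
    (α : ℝ) (hα1 : 1 / (m + 1 : ℝ) < α) (hα2 : α < 1)
    (q : Ω → ℝ)
    (hq : q = fun ω => (fun i : Fin m => s i.castSucc ω)
      (Tuple.sort (fun i : Fin m => s i.castSucc ω)
        ⟨⌈(1 - α) * (m + 1 : ℝ)⌉₊ - 1, by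
          have hm1 : (0 : ℝ) < m + 1 := by positivity
          have h0 : 1 < α * (m + 1 : ℝ) := by
            rw [div_lt_iff₀ hm1] at hα1; linarith
          have h1 : (1 - α) * (m + 1 : ℝ) ≤ m := by nlinarith
          have h2 : ⌈(1 - α) * (m + 1 : ℝ)⌉₊ ≤ m := Nat.ceil_le.mpr (by exact_mod_cast h1)
          omega⟩)) :
    1 - α ≤ (μ {ω | L (X (Fin.last m) ω) - q ω ≤ Y (Fin.last m) ω ∧
        Y (Fin.last m) ω ≤ U (X (Fin.last m) ω) + q ω}).toReal ∧
    α - 1 / (m + 1 : ℝ) ≤ (μ {ω | ¬(L (X (Fin.last m) ω) - q ω ≤ Y (Fin.last m) ω ∧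
        Y (Fin.last m) ω ≤ U (X (Fin.last m) ω) + q ω)}).toReal := by
  subst hs
  set S : Ω → Fin (m + 1) → ℝ := fun ω i => max (L (X i ω) - Y i ω) (Y i ω - U (X i ω))
  have hquantile : 0 < (1 - α) * (m + 1 : ℝ) := mul_pos (by linarith) (by positivity)
  obtain ⟨j, rfl, hj⟩ : ∃ j : Fin m,
      q = (fun ω => (fun i : Fin m => S ω i.castSucc)
        (Tuple.sort (fun i : Fin m => S ω i.castSucc) j)) ∧
      ((j : ℕ) + 1 : ℝ) = ⌈(1 - α) * (m + 1 : ℝ)⌉₊ :=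
    ⟨_, hq, by exact_mod_cast Nat.sub_add_cancel (Nat.ceil_pos.mpr hquantile)⟩
  have hS : Exchangeable μ S :=
    Exchangeable.comp (Z := fun ω i => (X i ω, Y i ω)) hexch (by fun_prop)
      (g := fun z => max (L z.1 - z.2) (z.2 - U z.1)) (by fun_prop)
  have hSm : Measurable S := by fun_prop
  have hinj : ∀ᵐ ω ∂μ, Injective (S ω) :=
    hdistinct.mono fun ω h i i' heq => by_contra fun hne => h i i' hne heq
  simp only [← max_sub_sub_le_iff]
  rw [← measureReal_def, ← measureReal_def, hS.measureReal_last_le_sort_castSucc hSm hinj j,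
    hS.measureReal_not_last_le_sort_castSucc hSm hinj j]
  have hm1 : (0 : ℝ) < m + 1 := by positivity
  have hceil_le := Nat.le_ceil ((1 - α) * (m + 1 : ℝ))
  have hceil_lt := Nat.ceil_lt_add_one hquantile.le
  constructor
  · rw [le_div_iff₀ hm1]; linarith
  · have : (j + 1 : ℝ) / (m + 1) ≤ 1 - α + 1 / (m + 1) := by
      rw [div_le_iff₀ hm1, add_mul, one_div_mul_cancel hm1.ne']; linarith
    linarith
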